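/- arXiv:2103.10041 — 2 statements merged into one kernel-verified Lean document; each statement's English description precedes it below -/
import Mathlib

section
/- Let n ≥ 9 and let u, v be adjacent vertices of KG(n,3), and let S = (N(u) ∪ N(v)) \ {u,v}. Then KG(n,3) − S has no isolated vertex, i.e., S is a super vertex cut of size 2·((n−3 choose 3) − 1) − (n−6 choose 3). -/
/-- The "disjointness" graph on all finite subsets of `ℕ`: two distinct finsets
are adjacent iff they are disjoint.  The Kneser graph `KG(n,k)` is its induced
subgraph on the `k`-subsets of `{1,…,n}`. -/
def KGbig : SimpleGraph (Finset ℕ) where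
  Adj x y := x ≠ y ∧ Disjoint x y
  symm := ⟨fun x y h => ⟨h.1.symm, h.2.symm⟩⟩
  loopless := ⟨fun x h => h.1 rfl⟩

/-- The vertex set of the Kneser graph `KG(n,k)`: the `k`-element subsets of
`{1,…,n}`. -/
def vset (n k : ℕ) : Set (Finset ℕ) := {s | s ⊆ Finset.Icc 1 n ∧ s.card = k}

/-!
Outside `S`, the vertices `u` and `v` only see each other, so `{u, v}` is a component of
`KG(n,k) − S`. Every other surviving vertex `w` meets both `u` and `v`; a `k`-set containing a
point of `u \ w` and a point of `v \ w` and otherwise avoiding `w` (it fits since `2k ≤ n`) meets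
both as well, so it is a surviving neighbour of `w`. The size of `S` is inclusion–exclusion on
`N(u)` and `N(v)`, which meet in the `k`-subsets avoiding `u ∪ v`.
-/

namespace SimpleGraph

variable {V : Type*} {G : SimpleGraph V}

theorem Reachable.mem_of_adj_closed {C : Set V} (hC : ∀ x y, G.Adj x y → x ∈ C → y ∈ C)
    {x y : V} (h : G.Reachable x y) (hx : x ∈ C) : y ∈ C := by
  obtain ⟨p⟩ := h
  induction p with
  | nil => exact hx
  | cons hadj _ ih => exact ih (hC _ _ hadj hx)

theorem not_connected_induce_of_isolated_edge {s : Set V} {u v w : V} (hu : u ∈ s) (hw : w ∈ s)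
    (hwu : w ≠ u) (hwv : w ≠ v) (hNu : ∀ x ∈ s, G.Adj u x → x = v)
    (hNv : ∀ x ∈ s, G.Adj v x → x = u) : ¬ (G.induce s).Connected := by
  intro hconn
  let C : Set s := {x | (x : V) = u ∨ (x : V) = v}
  have hclosed : ∀ x y : s, (G.induce s).Adj x y → x ∈ C → y ∈ C := by
    rintro x y hxy (hx | hx)
    · exact Or.inr (hNu y y.2 (hx ▸ hxy))
    · exact Or.inl (hNv y y.2 (hx ▸ hxy))
  rcases (hconn.preconnected ⟨u, hu⟩ ⟨w, hw⟩).mem_of_adj_closed hclosed (Or.inl rfl) with h | h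
  exacts [hwu h, hwv h]

end SimpleGraph

open Finset

theorem Finset.powersetCard_inter_powersetCard {α : Type*} [DecidableEq α] (k : ℕ)
    (s t : Finset α) : powersetCard k s ∩ powersetCard k t = powersetCard k (s ∩ t) := by
  ext x
  simp only [mem_inter, mem_powersetCard, subset_inter_iff]
  tauto

namespace Kneser

variable {n k : ℕ} {u v w : Finset ℕ}

def neighborCut (n k : ℕ) (u v : Finset ℕ) : Set (Finset ℕ) :=
  {w ∈ vset n k | (KGbig.Adj u w ∨ KGbig.Adj v w) ∧ w ≠ u ∧ w ≠ v}

theorem neighborCut_comm : neighborCut n k u v = neighborCut n k v u := by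
  ext w
  simp only [neighborCut, Set.mem_ofPred_eq]
  tauto

theorem card_le_of_mem_vset (hu : u ∈ vset n k) : k ≤ n := by
  simpa [hu.2] using card_le_card hu.1

theorem two_mul_le_of_adj (hu : u ∈ vset n k) (hv : v ∈ vset n k) (huv : KGbig.Adj u v) :
    2 * k ≤ n := by
  have := card_le_card (union_subset hu.1 hv.1)
  rw [card_union_of_disjoint huv.2, hu.2, hv.2, Nat.card_Icc] at this
  omega

theorem eq_of_adj_of_mem_diff_neighborCut (hx : w ∈ vset n k \ neighborCut n k u v)
    (hadj : KGbig.Adj u w) : w = v := by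
  by_contra hwv
  exact hx.2 ⟨hx.1, Or.inl hadj, fun h => hadj.1 h.symm, hwv⟩

theorem not_disjoint_of_mem_diff_neighborCut (hx : w ∈ vset n k \ neighborCut n k u v)
    (hwu : w ≠ u) (hwv : w ≠ v) : ¬ Disjoint u w ∧ ¬ Disjoint v w := by
  constructor <;> intro hdisj <;> refine hx.2 ⟨hx.1, ?_, hwu, hwv⟩
  exacts [Or.inl ⟨fun h => hwu h.symm, hdisj⟩, Or.inr ⟨fun h => hwv h.symm, hdisj⟩]

theorem notMem_neighborCut_of_not_disjoint (hu : ¬ Disjoint u w) (hv : ¬ Disjoint v w) :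
    w ∉ neighborCut n k u v := by
  rintro ⟨-, h | h, -, -⟩
  exacts [hu h.2, hv h.2]

theorem exists_mem_vset_disjoint_of_mem_of_mem {a b : ℕ} (hk : 2 ≤ k) (hkn : w.card + k ≤ n)
    (ha : a ∈ Icc 1 n \ w) (hb : b ∈ Icc 1 n \ w) (hab : a ≠ b) :
    ∃ x ∈ vset n k, a ∈ x ∧ b ∈ x ∧ Disjoint x w := by
  have hsub : {a, b} ⊆ Icc 1 n \ w := insert_subset ha (singleton_subset_iff.2 hb)
  have hcard : k ≤ (Icc 1 n \ w).card := by
    have := le_card_sdiff w (Icc 1 n)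
    rw [Nat.card_Icc] at this
    omega
  obtain ⟨x, hax, hxt, hx⟩ :=
    exists_subsuperset_card_eq hsub (by rw [card_pair hab]; exact hk) hcard
  exact ⟨x, ⟨hxt.trans sdiff_subset, hx⟩, hax (by simp), hax (by simp),
    disjoint_of_subset_left hxt sdiff_disjoint⟩

theorem left_notMem_neighborCut : u ∉ neighborCut n k u v := fun h => h.2.2.1 rfl

theorem right_notMem_neighborCut : v ∉ neighborCut n k u v := fun h => h.2.2.2 rfl

theorem not_connected_induce_diff_neighborCut (hk : 2 ≤ k) (hu : u ∈ vset n k)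
    (hv : v ∈ vset n k) (huv : KGbig.Adj u v) :
    ¬ (KGbig.induce (vset n k \ neighborCut n k u v)).Connected := by
  obtain ⟨a, ha⟩ : u.Nonempty := card_pos.1 (by rw [hu.2]; omega)
  obtain ⟨b, hb⟩ : v.Nonempty := card_pos.1 (by rw [hv.2]; omega)
  obtain ⟨x, hx, hax, hbx, -⟩ := exists_mem_vset_disjoint_of_mem_of_mem (w := ∅) hk
    (by simpa using card_le_of_mem_vset hu) (by simpa using hu.1 ha) (by simpa using hv.1 hb)
    (ne_of_mem_of_not_mem ha (disjoint_right.1 huv.2 hb))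
  have hxS : x ∉ neighborCut n k u v := notMem_neighborCut_of_not_disjoint
    (not_disjoint_iff.2 ⟨a, ha, hax⟩) (not_disjoint_iff.2 ⟨b, hb, hbx⟩)
  refine SimpleGraph.not_connected_induce_of_isolated_edge ⟨hu, left_notMem_neighborCut⟩
    ⟨hx, hxS⟩ ?_ ?_ (fun y hy h => eq_of_adj_of_mem_diff_neighborCut hy h)
    (fun y hy h => eq_of_adj_of_mem_diff_neighborCut (neighborCut_comm (n := n) ▸ hy) h)
  · rintro rfl
    exact disjoint_left.1 huv.2 hbx hb
  · rintro rfl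
    exact disjoint_left.1 huv.2 ha hax

theorem exists_adj_of_mem_diff_neighborCut (hk : 2 ≤ k) (hu : u ∈ vset n k) (hv : v ∈ vset n k)
    (huv : KGbig.Adj u v) (hw : w ∈ vset n k \ neighborCut n k u v) :
    ∃ x ∈ vset n k \ neighborCut n k u v, KGbig.Adj w x := by
  by_cases hwu : w = u
  · exact ⟨v, ⟨hv, right_notMem_neighborCut⟩, hwu ▸ huv⟩
  by_cases hwv : w = v
  · exact ⟨u, ⟨hu, left_notMem_neighborCut⟩, hwv ▸ huv.symm⟩
  obtain ⟨a, ha⟩ : (u \ w).Nonempty := sdiff_nonempty.2 fun h =>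
    hwu (eq_of_subset_of_card_le h (by rw [hw.1.2, hu.2])).symm
  obtain ⟨b, hb⟩ : (v \ w).Nonempty := sdiff_nonempty.2 fun h =>
    hwv (eq_of_subset_of_card_le h (by rw [hw.1.2, hv.2])).symm
  rw [mem_sdiff] at ha hb
  obtain ⟨x, hx, hax, hbx, hxw⟩ := exists_mem_vset_disjoint_of_mem_of_mem hk
    (by rw [hw.1.2, ← two_mul]; exact two_mul_le_of_adj hu hv huv)
    (mem_sdiff.2 ⟨hu.1 ha.1, ha.2⟩) (mem_sdiff.2 ⟨hv.1 hb.1, hb.2⟩)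
    (ne_of_mem_of_not_mem ha.1 (disjoint_right.1 huv.2 hb.1))
  refine ⟨x, ⟨hx, notMem_neighborCut_of_not_disjoint (not_disjoint_iff.2 ⟨a, ha.1, hax⟩)
    (not_disjoint_iff.2 ⟨b, hb.1, hbx⟩)⟩, ?_, hxw.symm⟩
  rintro rfl
  exact ha.2 hax

theorem neighborCut_eq_coe :
    neighborCut n k u v =
      ↑((powersetCard k (Icc 1 n \ u) ∪ powersetCard k (Icc 1 n \ v)) \ {u, v}) := by
  ext w
  simp only [neighborCut, vset, KGbig, coe_sdiff, coe_union, coe_insert, coe_singleton,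
    Set.mem_sdiff, Set.mem_union, mem_coe, mem_powersetCard, subset_sdiff, Set.mem_insert_iff,
    Set.mem_singleton_iff, Set.mem_ofPred_eq]
  grind

theorem ncard_neighborCut (hu : u ∈ vset n k) (hv : v ∈ vset n k) (huv : KGbig.Adj u v) :
    (neighborCut n k u v).ncard = 2 * ((n - k).choose k - 1) - (n - 2 * k).choose k := by
  set A := powersetCard k (Icc 1 n \ u)
  set B := powersetCard k (Icc 1 n \ v)
  have hA : A.card = (n - k).choose k := by
    simp [A, card_sdiff_of_subset hu.1, hu.2]
  have hB : B.card = (n - k).choose k := by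
    simp [B, card_sdiff_of_subset hv.1, hv.2]
  have hAB : (A ∩ B).card = (n - 2 * k).choose k := by
    rw [powersetCard_inter_powersetCard, ← sdiff_union_distrib, card_powersetCard,
      card_sdiff_of_subset (union_subset hu.1 hv.1), card_union_of_disjoint huv.2, hu.2, hv.2,
      Nat.card_Icc, two_mul, Nat.add_sub_cancel]
  have huvAB : {u, v} ⊆ A ∪ B := by
    refine insert_subset (mem_union_right _ ?_) (singleton_subset_iff.2 (mem_union_left _ ?_))
    · exact mem_powersetCard.2 ⟨subset_sdiff.2 ⟨hu.1, huv.2⟩, hu.2⟩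
    · exact mem_powersetCard.2 ⟨subset_sdiff.2 ⟨hv.1, huv.2.symm⟩, hv.2⟩
  have hpair := card_pair huv.1
  have hchoose : 0 < (n - k).choose k :=
    Nat.choose_pos (by have := two_mul_le_of_adj hu hv huv; omega)
  have hunion := card_union_add_card_inter A B
  have h2 := card_le_card huvAB
  rw [neighborCut_eq_coe, Set.ncard_coe_finset, card_sdiff_of_subset huvAB]
  omega

end Kneser

theorem stmt_12_general (n : ℕ) (u v : Finset ℕ)
    (hu : u ∈ vset n 3) (hv : v ∈ vset n 3) (huv : KGbig.Adj u v)
    (S : Set (Finset ℕ))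
    (hS : S = {w ∈ vset n 3 | (KGbig.Adj u w ∨ KGbig.Adj v w) ∧ w ≠ u ∧ w ≠ v}) :
    ¬ (KGbig.induce (vset n 3 \ S)).Connected ∧
    (∀ w ∈ vset n 3 \ S, ∃ x ∈ vset n 3 \ S, KGbig.Adj w x) ∧
    S.ncard = 2 * ((n - 3).choose 3 - 1) - (n - 6).choose 3 := by
  obtain rfl : S = Kneser.neighborCut n 3 u v := hS
  exact ⟨Kneser.not_connected_induce_diff_neighborCut (by norm_num) hu hv huv,
    fun w hw => Kneser.exists_adj_of_mem_diff_neighborCut (by norm_num) hu hv huv hw,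
    Kneser.ncard_neighborCut hu hv huv⟩

/-- For `n ≥ 9` and adjacent vertices `u, v` of `KG(n,3)`, the set
`S = (N(u) ∪ N(v)) \ {u,v}` is a super vertex cut: its deletion disconnects the
graph, leaves no isolated vertex, and `|S| = 2(C(n−3,3) − 1) − C(n−6,3)`. -/
theorem stmt_12 (n : ℕ) (hn : 9 ≤ n) (u v : Finset ℕ)
    (hu : u ∈ vset n 3) (hv : v ∈ vset n 3) (huv : KGbig.Adj u v)
    (S : Set (Finset ℕ))
    (hS : S = {w ∈ vset n 3 | (KGbig.Adj u w ∨ KGbig.Adj v w) ∧ w ≠ u ∧ w ≠ v}) :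
    ¬ (KGbig.induce (vset n 3 \ S)).Connected ∧
    (∀ w ∈ vset n 3 \ S, ∃ x ∈ vset n 3 \ S, KGbig.Adj w x) ∧
    S.ncard = 2 * ((n - 3).choose 3 - 1) - (n - 6).choose 3 :=
  stmt_12_general n u v hu hv huv S hS
end

section
/- Let n ≥ 9 and suppose S ⊆ V(KG(n,3)) is such that KG(n,3) − S has at least two components, each with at least 2 vertices, and one component consists of exactly two adjacent vertices u, v. Then |S| ≥ 2·((n−3 choose 3) − 1) − (n−6 choose 3). -/
open Finset

def kneserNbhd (n k : ℕ) (u : Finset ℕ) : Finset (Finset ℕ) :=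
  powersetCard k (Icc 1 n \ u)

section Kneser

variable {n k : ℕ} {u v w : Finset ℕ}

lemma vset_eq_coe_powersetCard (n k : ℕ) : vset n k = ↑(powersetCard k (Icc 1 n)) := by
  ext s
  simp [vset, mem_powersetCard]

lemma vset_finite (n k : ℕ) : (vset n k).Finite := by
  rw [vset_eq_coe_powersetCard]
  exact finite_toSet _

lemma mem_kneserNbhd : w ∈ kneserNbhd n k u ↔ w ∈ vset n k ∧ Disjoint u w := by
  simp only [kneserNbhd, mem_powersetCard, subset_sdiff, vset, Set.mem_ofPred_eq]
  tauto

lemma card_kneserNbhd (hu : u ⊆ Icc 1 n) : #(kneserNbhd n k u) = (n - #u).choose k := by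
  rw [kneserNbhd, card_powersetCard, card_sdiff_of_subset hu, Nat.card_Icc, Nat.add_sub_cancel]

lemma kneserNbhd_inter : kneserNbhd n k u ∩ kneserNbhd n k v = kneserNbhd n k (u ∪ v) := by
  ext w
  simp only [mem_inter, mem_kneserNbhd, disjoint_union_left]
  tauto

lemma card_kneserNbhd_union (hu : u ∈ vset n k) (hv : v ∈ vset n k) (huv : Disjoint u v) :
    #(kneserNbhd n k u ∪ kneserNbhd n k v) = 2 * (n - k).choose k - (n - 2 * k).choose k := by
  have hinter : #(kneserNbhd n k u ∩ kneserNbhd n k v) = (n - 2 * k).choose k := by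
    rw [kneserNbhd_inter, card_kneserNbhd (union_subset hu.1 hv.1), card_union_of_disjoint huv,
      hu.2, hv.2, two_mul]
  have := card_union_add_card_inter (kneserNbhd n k u) (kneserNbhd n k v)
  rw [card_kneserNbhd hu.1, card_kneserNbhd hv.1, hu.2, hv.2, hinter] at this
  omega

lemma card_kneserNbhd_union_sdiff (hu : u ∈ vset n k) (hv : v ∈ vset n k) (huv : KGbig.Adj u v) :
    #((kneserNbhd n k u ∪ kneserNbhd n k v) \ {u, v})
      = 2 * (n - k).choose k - (n - 2 * k).choose k - 2 := by
  have hvu : v ∈ kneserNbhd n k u := mem_kneserNbhd.2 ⟨hv, huv.2⟩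
  have hunv : u ∈ kneserNbhd n k v := mem_kneserNbhd.2 ⟨hu, huv.2.symm⟩
  rw [card_sdiff_of_subset (insert_subset (mem_union_right _ hunv) (by simp [hvu])),
    card_pair huv.1, card_kneserNbhd_union hu hv huv.2]

lemma kneserNbhd_union_sdiff_subset {S : Set (Finset ℕ)}
    (hcomp : ∀ w ∈ vset n k \ S, w ≠ u → w ≠ v → ¬ KGbig.Adj u w ∧ ¬ KGbig.Adj v w) :
    ↑((kneserNbhd n k u ∪ kneserNbhd n k v) \ {u, v}) ⊆ S := by
  intro w hw
  simp only [coe_sdiff, coe_union, Set.mem_sdiff, Set.mem_union, mem_coe, mem_kneserNbhd,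
    coe_insert, coe_singleton, Set.mem_insert_iff, Set.mem_singleton_iff, not_or] at hw
  obtain ⟨hnbr, hwu, hwv⟩ := hw
  by_contra hwS
  have hw : w ∈ vset n k \ S := ⟨hnbr.elim (·.1) (·.1), hwS⟩
  obtain ⟨hnu, hnv⟩ := hcomp w hw hwu hwv
  rcases hnbr with ⟨-, hdisj⟩ | ⟨-, hdisj⟩
  · exact hnu ⟨Ne.symm hwu, hdisj⟩
  · exact hnv ⟨Ne.symm hwv, hdisj⟩

end Kneser

theorem stmt_14_general (n : ℕ) (S : Set (Finset ℕ)) (hSv : S ⊆ vset n 3)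
    (u v : Finset ℕ) (hu : u ∈ vset n 3 \ S) (hv : v ∈ vset n 3 \ S)
    (huv : KGbig.Adj u v)
    (hcomp : ∀ w ∈ vset n 3 \ S, w ≠ u → w ≠ v → ¬ KGbig.Adj u w ∧ ¬ KGbig.Adj v w) :
    2 * ((n - 3).choose 3 - 1) - (n - 6).choose 3 ≤ S.ncard := by
  have hcard : _ = _ - (n - 6).choose 3 - 2 := card_kneserNbhd_union_sdiff hu.1 hv.1 huv
  have hpos : 0 < #(kneserNbhd n 3 u) := card_pos.2 ⟨v, mem_kneserNbhd.2 ⟨hv.1, huv.2⟩⟩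
  rw [card_kneserNbhd hu.1.1, hu.1.2] at hpos
  calc 2 * ((n - 3).choose 3 - 1) - (n - 6).choose 3
      = #((kneserNbhd n 3 u ∪ kneserNbhd n 3 v) \ {u, v}) := by rw [hcard]; omega
    _ ≤ S.ncard := by
      rw [← Set.ncard_coe_finset]
      exact Set.ncard_le_ncard (kneserNbhd_union_sdiff_subset hcomp) ((vset_finite n 3).subset hSv)

/-- Let `n ≥ 9` and let `S` be a set of vertices of `KG(n,3)` whose deletion
leaves a disconnected graph with no isolated vertex, in which one component
consists of exactly the two adjacent vertices `u, v` (no other remaining vertex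
is adjacent to `u` or `v`).  Then `|S| ≥ 2(C(n−3,3) − 1) − C(n−6,3)`. -/
theorem stmt_14 (n : ℕ) (hn : 9 ≤ n) (S : Set (Finset ℕ)) (hSv : S ⊆ vset n 3)
    (u v : Finset ℕ) (hu : u ∈ vset n 3 \ S) (hv : v ∈ vset n 3 \ S)
    (huv : KGbig.Adj u v)
    (hdisc : ¬ (KGbig.induce (vset n 3 \ S)).Connected)
    (hnoiso : ∀ w ∈ vset n 3 \ S, ∃ x ∈ vset n 3 \ S, KGbig.Adj w x)
    (hcomp : ∀ w ∈ vset n 3 \ S, w ≠ u → w ≠ v → ¬ KGbig.Adj u w ∧ ¬ KGbig.Adj v w) :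
    2 * ((n - 3).choose 3 - 1) - (n - 6).choose 3 ≤ S.ncard :=
  stmt_14_general n S hSv u v hu hv huv hcomp
end
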